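/- arXiv:2603.18997 — 9 statements merged into one kernel-verified Lean document; each statement's English description precedes it below -/
import Mathlib

section
/- For every real number x with 0 ≤ x ≤ 2, one has √(2x) ≤ arccos(1 − x) ≤ π·√(x/2). -/
/-- Lemma 11(3): for `0 ≤ x ≤ 2`, `√(2x) ≤ arccos(1 − x) ≤ π·√(x/2)`. -/
theorem sqrt_le_arccos_le (x : ℝ) (h0 : 0 ≤ x) (h2 : x ≤ 2) :
    Real.sqrt (2 * x) ≤ Real.arccos (1 - x) ∧
      Real.arccos (1 - x) ≤ Real.pi * Real.sqrt (x / 2) := by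
  set θ := Real.arccos (1 - x) with hθ
  have hθ0 : 0 ≤ θ := Real.arccos_nonneg _
  have hθπ : θ ≤ Real.pi := Real.arccos_le_pi _
  have hcos : Real.cos θ = 1 - x := Real.cos_arccos (by linarith) (by linarith)
  have hsin0 : 0 ≤ Real.sin (θ / 2) := by
    apply Real.sin_nonneg_of_nonneg_of_le_pi (by linarith) (by linarith)
  have hsq : Real.sin (θ / 2) ^ 2 = x / 2 := by
    have hc := Real.cos_sq (θ/2)
    rw [show 2 * (θ/2) = θ by ring, hcos] at hc
    have h2 : Real.sin (θ/2) ^ 2 = 1 - Real.cos (θ/2) ^ 2 := by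
      have := Real.sin_sq_add_cos_sq (θ/2); linarith
    rw [h2, hc]; ring
  have hsval : Real.sin (θ / 2) = Real.sqrt (x / 2) := by
    rw [← hsq, Real.sqrt_sq_eq_abs, abs_of_nonneg hsin0]
  constructor
  · have h1 : Real.sqrt (2 * x) = 2 * Real.sin (θ / 2) := by
      rw [hsval, show (2:ℝ) * x = 4 * (x/2) by ring,
        Real.sqrt_mul (by norm_num : (0:ℝ) ≤ 4), show Real.sqrt 4 = 2 by
          rw [show (4:ℝ) = 2^2 by norm_num, Real.sqrt_sq (by norm_num)]]
    rw [h1]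
    have := Real.sin_le (x := θ/2) (by linarith)
    linarith
  · rw [← hsval]
    have := Real.mul_le_sin (x := θ/2) (by linarith) (by linarith)
    have hπ : 0 < Real.pi := Real.pi_pos
    rw [div_mul_eq_mul_div, div_le_iff₀ hπ] at this
    linarith
end

section
/- For all integers r ≥ 2 and 2 ≤ k ≤ r, one has sinh(r)/sin(π/2^k) ≤ sinh(2r); equivalently, arsinh(sinh(r)/sin(π/2^k)) ≤ 2r. (In the paper's construction this says that every vertex of the graph G_r, whose level-k vertices lie at polar radius ρ_k = arsinh(sinh r / sin(π/2^k)), lies within hyperbolic distance 2r of the origin, so that G_r is a strongly hyperbolic uniform disk graph.) -/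
/-- Analytic core of Lemma 10: for integers `2 ≤ k ≤ r`,
`sinh r / sin(π/2^k) ≤ sinh(2r)`; equivalently
`arsinh(sinh r / sin(π/2^k)) ≤ 2r`. -/
theorem sinh_div_sin_le_sinh_two_mul (r k : ℕ) (hr : 2 ≤ r) (hk : 2 ≤ k) (hkr : k ≤ r) :
    Real.sinh r / Real.sin (Real.pi / 2 ^ k) ≤ Real.sinh (2 * (r : ℝ)) ∧
      Real.arsinh (Real.sinh r / Real.sin (Real.pi / 2 ^ k)) ≤ 2 * (r : ℝ) := by
  have hpi := Real.pi_pos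
  have h2k : (1:ℝ) ≤ (2:ℝ) ^ k := one_le_pow₀ (by norm_num)
  have hxpos : (0:ℝ) < Real.pi / 2 ^ k := by positivity
  have hxle : Real.pi / 2 ^ k ≤ Real.pi / 2 := by
    apply div_le_div_of_nonneg_left hpi.le (by norm_num)
    calc (2:ℝ) ≤ 2 ^ 2 := by norm_num
    _ ≤ 2 ^ k := pow_le_pow_right₀ (by norm_num) hk
  have hsin : (2:ℝ) / 2 ^ k ≤ Real.sin (Real.pi / 2 ^ k) := by
    have := Real.mul_le_sin hxpos.le hxle
    calc (2:ℝ) / 2 ^ k = 2 / Real.pi * (Real.pi / 2 ^ k) := by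
          field_simp
    _ ≤ _ := this
  have hsinpos : 0 < Real.sin (Real.pi / 2 ^ k) := lt_of_lt_of_le (by positivity) hsin
  have hsinh : 0 < Real.sinh (r : ℝ) := Real.sinh_pos_iff.2 (by exact_mod_cast (by omega : 0 < r))
  -- main bound
  have key : Real.sinh r / Real.sin (Real.pi / 2 ^ k) ≤ Real.sinh (2 * (r : ℝ)) := by
    have h1 : Real.sinh r / Real.sin (Real.pi / 2 ^ k) ≤ Real.sinh r * (2 ^ k / 2) := by
      rw [div_le_iff₀ hsinpos]
      calc Real.sinh (r:ℝ) = Real.sinh (r:ℝ) * (2 ^ k / 2) * (2 / 2 ^ k) := by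
            field_simp
      _ ≤ Real.sinh (r:ℝ) * (2 ^ k / 2) * Real.sin (Real.pi / 2 ^ k) := by
            apply mul_le_mul_of_nonneg_left hsin; positivity
    have hcosh : (2:ℝ) ^ k / 4 ≤ Real.cosh (r : ℝ) := by
      have h1 : ((2:ℝ)) ^ k ≤ 2 ^ r := pow_le_pow_right₀ (by norm_num) hkr
      have h2 : (2:ℝ) ^ r ≤ Real.exp r := by
        rw [← Real.exp_one_rpow (r:ℝ), ← Real.rpow_natCast 2 r]
        apply Real.rpow_le_rpow (by norm_num) (le_of_lt (by exact_mod_cast Real.exp_one_gt_d9.trans_le' (by norm_num))) (by positivity)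
      have h3 : Real.exp r / 2 ≤ Real.cosh r := by
        rw [Real.cosh_eq]
        have := (Real.exp_pos (-(r:ℝ))).le
        linarith
      linarith
    calc Real.sinh r / Real.sin (Real.pi / 2 ^ k) ≤ Real.sinh r * (2 ^ k / 2) := h1
    _ = 2 * Real.sinh r * (2 ^ k / 4) := by ring
    _ ≤ 2 * Real.sinh r * Real.cosh r := by
          apply mul_le_mul_of_nonneg_left hcosh; positivity
    _ = Real.sinh (2 * (r : ℝ)) := (Real.sinh_two_mul _).symm
  refine ⟨key, ?_⟩
  have := Real.arsinh_le_arsinh.2 key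
  rwa [Real.arsinh_sinh] at this
end

section
/- For every real r > 0 and every integer k ≥ 2, setting ρ = arsinh(sinh r / sin(π/2^k)), one has cosh(ρ)·cosh(ρ) − sinh(ρ)·sinh(ρ)·cos(2π/2^k) = cosh(2r). (By the hyperbolic law of cosines this says that two points at polar radius ρ whose angular distance is 2π/2^k have hyperbolic distance exactly 2r, i.e. consecutive vertices of the regular 2^k-gon used in the construction have distance exactly 2r.) -/
/-- For real `r > 0` and integer `k ≥ 2`, with `ρ = arsinh(sinh r / sin(π/2^k))`,
two points at polar radius `ρ` and angular distance `2π/2^k` have hyperbolic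
distance exactly `2r` (via the hyperbolic law of cosines). -/
theorem side_length_eq_two_r (r : ℝ) (hr : 0 < r) (k : ℕ) (hk : 2 ≤ k) :
    Real.cosh (Real.arsinh (Real.sinh r / Real.sin (Real.pi / 2 ^ k))) *
        Real.cosh (Real.arsinh (Real.sinh r / Real.sin (Real.pi / 2 ^ k))) -
      Real.sinh (Real.arsinh (Real.sinh r / Real.sin (Real.pi / 2 ^ k))) *
          Real.sinh (Real.arsinh (Real.sinh r / Real.sin (Real.pi / 2 ^ k))) *
        Real.cos (2 * Real.pi / 2 ^ k) = Real.cosh (2 * r) := by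
  set θ : ℝ := Real.pi / 2 ^ k with hθ
  have hθpos : 0 < θ := div_pos Real.pi_pos (by positivity)
  have hθlt : θ < Real.pi := by
    rw [hθ, div_lt_iff₀ (by positivity)]
    have h4 : (4:ℝ) ≤ 2 ^ k := by
      calc (4:ℝ) = 2 ^ 2 := by norm_num
      _ ≤ 2 ^ k := by exact pow_le_pow_right₀ (by norm_num) hk
    nlinarith [Real.pi_pos]
  have hs : 0 < Real.sin θ := Real.sin_pos_of_pos_of_lt_pi hθpos hθlt
  have h2 : 2 * Real.pi / 2 ^ k = 2 * θ := by rw [hθ]; ring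
  rw [h2, Real.cos_two_mul' ]
  have hsinh : Real.sinh (Real.arsinh (Real.sinh r / Real.sin θ)) =
      Real.sinh r / Real.sin θ := Real.sinh_arsinh _
  have hcosh : Real.cosh (Real.arsinh (Real.sinh r / Real.sin θ)) *
      Real.cosh (Real.arsinh (Real.sinh r / Real.sin θ)) =
      (Real.sinh r / Real.sin θ) * (Real.sinh r / Real.sin θ) + 1 := by
    have := Real.cosh_sq (Real.arsinh (Real.sinh r / Real.sin θ))
    rw [hsinh] at this
    nlinarith [this]
  rw [hsinh, hcosh]
  have hc2 : Real.cosh (2 * r) = 2 * Real.sinh r ^ 2 + 1 := by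
    rw [Real.cosh_two_mul, Real.cosh_sq]; ring
  have hsin2 : Real.sin θ ^ 2 + Real.cos θ ^ 2 = 1 := Real.sin_sq_add_cos_sq θ
  field_simp
  nlinarith [hs, hsin2, hc2]
end

section
/- For every real r > 0, every integer k ≥ 2, and every real Δ with 2π/2^k < Δ ≤ π, setting ρ = arsinh(sinh r / sin(π/2^k)), one has cosh(ρ)·cosh(ρ) − sinh(ρ)·sinh(ρ)·cos(Δ) > cosh(2r). (Hence two points at polar radius ρ whose angular distance exceeds 2π/2^k have hyperbolic distance strictly greater than 2r; in the paper's construction this means chords of the regular 2^k-gon are not edges, so each level induces exactly a cycle.) -/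
/-- For real `r > 0`, integer `k ≥ 2`, and `2π/2^k < Δ ≤ π`, with
`ρ = arsinh(sinh r / sin(π/2^k))`, two points at polar radius `ρ` and angular
distance `Δ` have hyperbolic distance strictly greater than `2r`. -/
theorem chord_longer_than_two_r (r : ℝ) (hr : 0 < r) (k : ℕ) (hk : 2 ≤ k)
    (Δ : ℝ) (hΔ₁ : 2 * Real.pi / 2 ^ k < Δ) (hΔ₂ : Δ ≤ Real.pi) :
    Real.cosh (Real.arsinh (Real.sinh r / Real.sin (Real.pi / 2 ^ k))) *
        Real.cosh (Real.arsinh (Real.sinh r / Real.sin (Real.pi / 2 ^ k))) -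
      Real.sinh (Real.arsinh (Real.sinh r / Real.sin (Real.pi / 2 ^ k))) *
          Real.sinh (Real.arsinh (Real.sinh r / Real.sin (Real.pi / 2 ^ k))) *
        Real.cos Δ > Real.cosh (2 * r) := by
  have hpi := Real.pi_pos
  set θ : ℝ := Real.pi / 2 ^ k with hθdef
  have h2k : (4 : ℝ) ≤ 2 ^ k := by
    calc (4 : ℝ) = 2 ^ 2 := by norm_num
    _ ≤ 2 ^ k := by exact_mod_cast Nat.pow_le_pow_right (by norm_num) hk
  have hθpos : 0 < θ := div_pos hpi (by positivity)
  have hθlt : θ ≤ Real.pi / 4 := by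
    rw [hθdef, div_le_div_iff₀ (by positivity) (by norm_num)]
    nlinarith
  have h2θ : 2 * θ = 2 * Real.pi / 2 ^ k := by ring
  have hcos : Real.cos Δ < Real.cos (2 * θ) := by
    apply Real.cos_lt_cos_of_nonneg_of_le_pi (by positivity) hΔ₂
    rw [h2θ]; exact hΔ₁
  have hcos2 : Real.cos (2 * θ) = 1 - 2 * Real.sin θ ^ 2 := by
    rw [Real.cos_two_mul, Real.sin_sq]
    ring
  have hsθ : 0 < Real.sin θ := Real.sin_pos_of_pos_of_lt_pi hθpos
    (lt_of_le_of_lt hθlt (by linarith))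
  have hsr : 0 < Real.sinh r := Real.sinh_pos_iff.mpr hr
  set x : ℝ := Real.sinh r / Real.sin θ with hxdef
  have hxsin : x * Real.sin θ = Real.sinh r := div_mul_cancel₀ _ (ne_of_gt hsθ)
  have hxpos : 0 < x := div_pos hsr hsθ
  have hsa : Real.sinh (Real.arsinh x) = x := Real.sinh_arsinh x
  have hca : Real.cosh (Real.arsinh x) * Real.cosh (Real.arsinh x) = 1 + x * x := by
    have := Real.cosh_sq (Real.arsinh x)
    nlinarith [this, hsa]
  have hc2r : Real.cosh (2 * r) = 1 + 2 * Real.sinh r * Real.sinh r := by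
    have h1 := Real.cosh_two_mul r
    have h2 := Real.cosh_sq r
    nlinarith
  rw [hsa, hca, hc2r]
  nlinarith [sq_nonneg (Real.sinh r), mul_pos hxpos hxpos, hcos, hcos2, hxsin,
    mul_pos hsθ hsθ, sq_nonneg x]
end

section
/- Let r ≥ 2 be an integer and let 2 ≤ i < j ≤ r be integers. With ρ_k = arsinh(sinh r / sin(π/2^k)) for k ∈ {i, j}, one has arccos( (cosh ρ_i · cosh ρ_j − cosh(2r)) / (sinh ρ_i · sinh ρ_j) ) ≤ √(2.1/2) · π² · 2^{−(i+j)/2}. -/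
set_option maxHeartbeats 1000000

open Real

/-- Polar radius of the level-`k` vertices of the construction `G_r`. -/
noncomputable def rho (r k : ℕ) : ℝ :=
  Real.arsinh (Real.sinh (r : ℝ) / Real.sin (Real.pi / 2 ^ k))

lemma arccos_antitone {x y : ℝ} (h : x ≤ y) : Real.arccos y ≤ Real.arccos x := by
  rw [Real.arccos_eq_pi_div_two_sub_arcsin, Real.arccos_eq_pi_div_two_sub_arcsin]
  have := Real.monotone_arcsin h
  linarith

lemma arccos_le_of_cos_le {x B : ℝ} (hB0 : 0 ≤ B) (hBpi : B ≤ Real.pi)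
    (h : Real.cos B ≤ x) : Real.arccos x ≤ B := by
  calc Real.arccos x ≤ Real.arccos (Real.cos B) := arccos_antitone h
    _ = B := Real.arccos_cos hB0 hBpi

/-- Key estimate in Lemma 13: for integers `2 ≤ i < j ≤ r`, the angular distance
at which points with polar radii `ρ_i` and `ρ_j` have hyperbolic distance `2r`
is at most `√(2.1/2)·π²·2^{−(i+j)/2}`. -/
theorem angular_distance_bound (r i j : ℕ) (hr : 2 ≤ r) (hi : 2 ≤ i) (hij : i < j)
    (hjr : j ≤ r) :
    Real.arccos ((Real.cosh (rho r i) * Real.cosh (rho r j) - Real.cosh (2 * (r : ℝ))) /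
        (Real.sinh (rho r i) * Real.sinh (rho r j))) ≤
      Real.sqrt (2.1 / 2) * Real.pi ^ 2 * (2 : ℝ) ^ (-(((i : ℝ) + (j : ℝ)) / 2)) := by
  have pi_pos := Real.pi_pos
  set ai : ℝ := Real.sin (Real.pi / 2 ^ i) with hai
  set aj : ℝ := Real.sin (Real.pi / 2 ^ j) with haj
  have h2i : (1:ℝ) < 2 ^ i := one_lt_pow₀ one_lt_two (by omega)
  have h2j : (1:ℝ) < 2 ^ j := one_lt_pow₀ one_lt_two (by omega)
  have hai_pos : 0 < ai := Real.sin_pos_of_pos_of_lt_pi (by positivity)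
    (by rw [div_lt_iff₀ (by positivity)]; nlinarith)
  have haj_pos : 0 < aj := Real.sin_pos_of_pos_of_lt_pi (by positivity)
    (by rw [div_lt_iff₀ (by positivity)]; nlinarith)
  have hai_le : ai ≤ Real.pi / 2 ^ i := Real.sin_le (by positivity)
  have haj_le : aj ≤ Real.pi / 2 ^ j := Real.sin_le (by positivity)
  have hai1 : ai ≤ 1 := Real.sin_le_one _
  have haj1 : aj ≤ 1 := Real.sin_le_one _
  have hs : (0:ℝ) < Real.sinh r := Real.sinh_pos_iff.2 (by positivity)
  have hsi : Real.sinh (rho r i) = Real.sinh r / ai := Real.sinh_arsinh _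
  have hsj : Real.sinh (rho r j) = Real.sinh r / aj := Real.sinh_arsinh _
  set t : ℝ := ai * aj with ht
  have ht_pos : 0 < t := mul_pos hai_pos haj_pos
  have ht1 : t ≤ 1 := by nlinarith
  -- the quantity X is at least 1 - 2t
  set X : ℝ := (Real.cosh (rho r i) * Real.cosh (rho r j) - Real.cosh (2 * (r : ℝ))) /
      (Real.sinh (rho r i) * Real.sinh (rho r j)) with hX
  have hsisj : Real.sinh (rho r i) * Real.sinh (rho r j) = Real.sinh r ^ 2 / t := by
    rw [hsi, hsj]; field_simp; ring
  have hcosh2r : Real.cosh (2 * (r:ℝ)) = 1 + 2 * Real.sinh r ^ 2 := by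
    rw [Real.cosh_two_mul, Real.cosh_sq]; ring
  have hprod : 1 + Real.sinh (rho r i) * Real.sinh (rho r j) ≤
      Real.cosh (rho r i) * Real.cosh (rho r j) := by
    have h1 : (1:ℝ) ≤ Real.cosh (rho r i - rho r j) := Real.one_le_cosh _
    rw [Real.cosh_sub] at h1; linarith
  have hXge : 1 - 2 * t ≤ X := by
    rw [hX, le_div_iff₀ (by rw [hsisj]; positivity)]
    rw [hcosh2r]
    have h2 : (1 - 2*t) * (Real.sinh (rho r i) * Real.sinh (rho r j)) =
        Real.sinh (rho r i) * Real.sinh (rho r j) - 2 * Real.sinh r ^ 2 := by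
      rw [hsisj]; field_simp
    rw [h2]; linarith
  -- arccos X ≤ π * √t
  have hst : Real.sqrt t ≤ 1 := Real.sqrt_le_one.2 ht1
  have hst0 : 0 ≤ Real.sqrt t := Real.sqrt_nonneg t
  have hkey : Real.arccos X ≤ Real.pi * Real.sqrt t := by
    apply arccos_le_of_cos_le (by positivity) (by nlinarith)
    have hsin : Real.sqrt t ≤ Real.sin (Real.pi * Real.sqrt t / 2) := by
      have := Real.mul_le_sin (x := Real.pi * Real.sqrt t / 2) (by positivity)
        (by rw [div_le_div_iff₀ (by norm_num) (by norm_num)]; nlinarith)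
      calc Real.sqrt t = 2 / Real.pi * (Real.pi * Real.sqrt t / 2) := by
            field_simp
        _ ≤ _ := this
    have hcos : Real.cos (Real.pi * Real.sqrt t) =
        1 - 2 * Real.sin (Real.pi * Real.sqrt t / 2) ^ 2 := by
      have h1 := Real.cos_two_mul' (Real.pi * Real.sqrt t / 2)
      have h2 := Real.sin_sq_add_cos_sq (Real.pi * Real.sqrt t / 2)
      rw [show 2 * (Real.pi * Real.sqrt t / 2) = Real.pi * Real.sqrt t by ring] at h1
      linarith
    have hsq : t ≤ Real.sin (Real.pi * Real.sqrt t / 2) ^ 2 := by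
      have := Real.sq_sqrt ht_pos.le
      nlinarith
    calc Real.cos (Real.pi * Real.sqrt t) ≤ 1 - 2 * t := by rw [hcos]; linarith
      _ ≤ X := hXge
  -- now bound π√t by the RHS
  have hpow : ((2:ℝ) ^ (-(((i : ℝ) + (j : ℝ)) / 2))) ^ 2 = ((2:ℝ)^(i+j))⁻¹ := by
    rw [← Real.rpow_natCast ((2:ℝ) ^ (-(((i : ℝ) + (j : ℝ)) / 2))) 2,
      ← Real.rpow_mul (by norm_num)]
    rw [show (-(((i : ℝ) + (j : ℝ)) / 2)) * (2:ℕ) = -(((i:ℝ)+(j:ℝ))) by push_cast; ring]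
    rw [Real.rpow_neg (by norm_num), ← Real.rpow_natCast 2 (i+j)]
    push_cast; ring_nf
  have hpow_pos : (0:ℝ) < (2:ℝ) ^ (-(((i : ℝ) + (j : ℝ)) / 2)) := Real.rpow_pos_of_pos (by norm_num) _
  have htle : t ≤ Real.pi ^ 2 * ((2:ℝ)^(i+j))⁻¹ := by
    have : t ≤ (Real.pi / 2 ^ i) * (Real.pi / 2 ^ j) := by
      apply mul_le_mul hai_le haj_le haj_pos.le (by positivity)
    calc t ≤ (Real.pi / 2 ^ i) * (Real.pi / 2 ^ j) := this
      _ = Real.pi ^ 2 * ((2:ℝ)^(i+j))⁻¹ := by rw [pow_add]; field_simp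
  have hsqrt_le : Real.sqrt t ≤ Real.pi * (2:ℝ) ^ (-(((i : ℝ) + (j : ℝ)) / 2)) := by
    rw [show Real.pi * (2:ℝ) ^ (-(((i : ℝ) + (j : ℝ)) / 2)) =
        Real.sqrt ((Real.pi * (2:ℝ) ^ (-(((i : ℝ) + (j : ℝ)) / 2)))^2) from
      (Real.sqrt_sq (by positivity)).symm]
    apply Real.sqrt_le_sqrt
    rw [mul_pow, hpow]
    exact htle
  have hconst : (1:ℝ) ≤ Real.sqrt (2.1 / 2) := by
    rw [show (1:ℝ) = Real.sqrt 1 from (Real.sqrt_one).symm]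
    exact Real.sqrt_le_sqrt (by norm_num)
  calc Real.arccos X ≤ Real.pi * Real.sqrt t := hkey
    _ ≤ Real.pi * (Real.pi * (2:ℝ) ^ (-(((i : ℝ) + (j : ℝ)) / 2))) := by
        exact mul_le_mul_of_nonneg_left hsqrt_le pi_pos.le
    _ = 1 * Real.pi ^ 2 * (2:ℝ) ^ (-(((i : ℝ) + (j : ℝ)) / 2)) := by ring
    _ ≤ Real.sqrt (2.1 / 2) * Real.pi ^ 2 * (2 : ℝ) ^ (-(((i : ℝ) + (j : ℝ)) / 2)) := by
        apply mul_le_mul_of_nonneg_right (mul_le_mul_of_nonneg_right hconst (by positivity))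
          hpow_pos.le
end

section
/- Let r ≥ 2 be an integer, let 2 ≤ i ≤ j ≤ r be integers, and set ρ_k = arsinh(sinh r / sin(π/2^k)) for k ∈ {i, j}. Then for every real ρ with 0 ≤ ρ ≤ ρ_i and every real Δ with 0 ≤ Δ ≤ 2π/2^j, one has cosh(ρ)·cosh(ρ_j) − sinh(ρ)·sinh(ρ_j)·cos(Δ) ≤ cosh(2r). (Hence any point at polar radius at most ρ_i whose angular distance to a level-j point is at most 2π/2^j lies within hyperbolic distance 2r of it; this yields the lower bound of Lemma 13 that every level-i vertex is adjacent to its two angularly closest level-j vertices.) -/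
private lemma aux_convex {c₁ c₂ u U M : ℝ} (hc₁ : 0 ≤ c₁) (hu1 : 1 ≤ u) (huU : u ≤ U)
    (h0 : c₁ + c₂ ≤ M) (hU : c₁ * U ^ 2 + c₂ ≤ M * U) : c₁ * u ^ 2 + c₂ ≤ M * u := by
  have h1 : 0 ≤ (M - c₁ - c₂) * (U - u) := mul_nonneg (by linarith) (by linarith)
  have h2 : 0 ≤ (M * U - c₁ * U ^ 2 - c₂) * (u - 1) := mul_nonneg (by linarith) (by linarith)
  have h3 : 0 ≤ c₁ * (U - u) * (U - 1) * (u - 1) :=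
    mul_nonneg (mul_nonneg (mul_nonneg hc₁ (by linarith)) (by linarith)) (by linarith)
  have key : (c₁ * u ^ 2 + c₂ - M * u) * (U - 1) ≤ 0 := by nlinarith [h1, h2, h3]
  rcases eq_or_lt_of_le (show (1:ℝ) ≤ U by linarith) with h | h
  · have : u = 1 := le_antisymm (h ▸ huU) hu1
    subst this; linarith
  · nlinarith [key, h]

private lemma aux_sqrt_le {x M : ℝ} (hM : 0 ≤ M) (h : x ≤ M ^ 2) : Real.sqrt x ≤ M := by
  calc Real.sqrt x ≤ Real.sqrt (M ^ 2) := Real.sqrt_le_sqrt h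
  _ = M := Real.sqrt_sq hM

private lemma aux_sqA {s b C : ℝ} (hb : 0 ≤ b) (h1 : b ≤ 2 * s * C)
    (h2 : C ^ 2 = s ^ 2 + 1) : 1 + b ^ 2 ≤ (2 * s ^ 2 + 1) ^ 2 := by
  nlinarith [pow_le_pow_left₀ hb h1 2]

private lemma aux_stepB {ai aj s : ℝ} (hai : 0 < ai) (haj : 0 < aj) (hji : aj ≤ ai)
    (hai1 : ai ≤ 1) (hs4 : 1 ≤ 4 * s ^ 2 * aj) (hs0 : 0 < s) :
    Real.sqrt (1 + (s/ai)^2) * Real.sqrt (1 + (s/aj)^2)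
      - (s/ai) * (s/aj) * (1 - 2*aj^2) ≤ 2 * s ^ 2 + 1 := by
  have hsum_pos : 0 < ai * aj := by positivity
  have hsqrt : Real.sqrt (1 + (s/ai)^2) * Real.sqrt (1 + (s/aj)^2)
      ≤ (s^2 + (ai^2 + aj^2)/2) / (ai*aj) := by
    rw [← Real.sqrt_mul (by positivity)]
    apply aux_sqrt_le (by positivity)
    rw [show ((s^2 + (ai^2 + aj^2)/2) / (ai*aj))^2
        = (s^2 + (ai^2 + aj^2)/2)^2 / ((ai*aj)^2) from div_pow _ _ 2]
    rw [le_div_iff₀ (by positivity)]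
    have e1 : (1 + (s/ai)^2) * (1 + (s/aj)^2) * (ai*aj)^2
        = (ai^2 + s^2) * (aj^2 + s^2) := by field_simp
    rw [e1]
    nlinarith [sq_nonneg (ai^2 - aj^2)]
  have h2 : (s^2 + (ai^2 + aj^2)/2) / (ai*aj) - (s/ai) * (s/aj) * (1 - 2*aj^2)
      ≤ 2 * s ^ 2 + 1 := by
    have e2 : (s^2 + (ai^2 + aj^2)/2) / (ai*aj) - (s/ai) * (s/aj) * (1 - 2*aj^2)
        = (s^2 + (ai^2 + aj^2)/2 - s^2 * (1 - 2*aj^2)) / (ai*aj) := by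
      field_simp
    rw [e2, div_le_iff₀ hsum_pos]
    nlinarith [mul_nonneg (sub_nonneg.2 hji)
      (show (0:ℝ) ≤ 4*s^2*aj - (ai - aj) by nlinarith), sq_nonneg s]
  linarith

private lemma aux_ajsq {aj : ℝ} (h0 : 0 < aj) (h : aj ≤ Real.sqrt 2 / 2) : aj ^ 2 ≤ 1 / 2 := by
  nlinarith [Real.sq_sqrt (by norm_num : (0:ℝ) ≤ 2), Real.sqrt_nonneg 2]

private lemma aux_exp_id' (x A b : ℝ) : Real.cosh x * A - Real.sinh x * b
    = ((A - b)/2 * Real.exp x ^ 2 + (A + b)/2) / Real.exp x := by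
  have h := (Real.exp_pos x).ne'
  rw [Real.cosh_eq, Real.sinh_eq, Real.exp_neg]
  field_simp
  ring

private lemma aux_assemble {A B c M ρ R : ℝ} (hρ0 : 0 ≤ ρ) (hρR : ρ ≤ R)
    (hB0 : 0 ≤ B) (hc0 : 0 ≤ c) (hc1 : c ≤ 1) (hBA : B ≤ A)
    (h0 : A ≤ M) (hend : Real.cosh R * A - Real.sinh R * (B * c) ≤ M) :
    Real.cosh ρ * A - Real.sinh ρ * (B * c) ≤ M := by
  have hBc : B * c ≤ A := le_trans (by nlinarith) hBA
  have hc₁0 : 0 ≤ (A - B * c) / 2 := by linarith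
  have hu1 : 1 ≤ Real.exp ρ := Real.one_le_exp hρ0
  have huU : Real.exp ρ ≤ Real.exp R := Real.exp_le_exp.2 hρR
  have hU0 : 0 < Real.exp R := Real.exp_pos _
  have hu0 : 0 < Real.exp ρ := Real.exp_pos _
  have h0' : (A - B * c)/2 + (A + B * c)/2 ≤ M := by linarith
  have hUend : (A - B * c)/2 * Real.exp R ^ 2 + (A + B * c)/2 ≤ M * Real.exp R := by
    have e3 := aux_exp_id' R A (B * c)
    rw [eq_div_iff hU0.ne'] at e3
    rw [← e3]
    exact mul_le_mul_of_nonneg_right hend hU0.le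
  have hmain := aux_convex hc₁0 hu1 huU h0' hUend
  rw [aux_exp_id' ρ A (B * c), div_le_iff₀ hu0]
  exact hmain

private lemma aux_self_le_sqrt {b : ℝ} (hb : 0 ≤ b) : b ≤ Real.sqrt (1 + b ^ 2) := by
  calc b = Real.sqrt (b ^ 2) := (Real.sqrt_sq hb).symm
  _ ≤ _ := Real.sqrt_le_sqrt (by linarith)

private lemma aux_exp_id (x A b : ℝ) : Real.cosh x * A - Real.sinh x * b
    = ((A - b)/2 * Real.exp x ^ 2 + (A + b)/2) / Real.exp x := by
  have h := (Real.exp_pos x).ne'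
  rw [Real.cosh_eq, Real.sinh_eq, Real.exp_neg]
  field_simp
  ring

/-- Lower-bound ingredient of Lemma 13: any point at polar radius at most `ρ_i`
whose angular distance to a level-`j` point (at radius `ρ_j`) is at most
`2π/2^j` lies within hyperbolic distance `2r` of it. -/
theorem close_points_are_adjacent (r i j : ℕ) (hr : 2 ≤ r) (hi : 2 ≤ i) (hij : i ≤ j)
    (hjr : j ≤ r) (ρ : ℝ) (hρ₀ : 0 ≤ ρ) (hρ : ρ ≤ rho r i)
    (Δ : ℝ) (hΔ₀ : 0 ≤ Δ) (hΔ : Δ ≤ 2 * Real.pi / 2 ^ j) :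
    Real.cosh ρ * Real.cosh (rho r j) -
        Real.sinh ρ * Real.sinh (rho r j) * Real.cos Δ ≤ Real.cosh (2 * (r : ℝ)) := by
  set s := Real.sinh r with hs_def
  set ai := Real.sin (Real.pi / 2 ^ i) with hai_def
  set aj := Real.sin (Real.pi / 2 ^ j) with haj_def
  have hπ := Real.pi_pos
  have h2i : (4:ℝ) ≤ 2 ^ i := by
    calc (4:ℝ) = 2 ^ 2 := by norm_num
    _ ≤ 2 ^ i := by apply pow_le_pow_right₀ (by norm_num) hi
  have h2j : (4:ℝ) ≤ 2 ^ j := by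
    calc (4:ℝ) = 2 ^ 2 := by norm_num
    _ ≤ 2 ^ j := by apply pow_le_pow_right₀ (by norm_num) (hi.trans hij)
  have h2ij : (2:ℝ) ^ i ≤ 2 ^ j := pow_le_pow_right₀ (by norm_num) hij
  have h2jr : (2:ℝ) ^ j ≤ 2 ^ r := pow_le_pow_right₀ (by norm_num) hjr
  have hargi_pos : 0 < Real.pi / 2 ^ i := by positivity
  have hargj_pos : 0 < Real.pi / 2 ^ j := by positivity
  have hargi_le : Real.pi / 2 ^ i ≤ Real.pi / 4 := by
    apply div_le_div_of_nonneg_left hπ.le (by norm_num) h2i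
  have hargj_le : Real.pi / 2 ^ j ≤ Real.pi / 4 := by
    apply div_le_div_of_nonneg_left hπ.le (by norm_num) h2j
  have hargji : Real.pi / 2 ^ j ≤ Real.pi / 2 ^ i := by
    apply div_le_div_of_nonneg_left hπ.le (by positivity) h2ij
  have hpi4 : Real.pi / 4 ≤ Real.pi / 2 := by linarith
  have hai_pos : 0 < ai := Real.sin_pos_of_pos_of_lt_pi hargi_pos (by linarith)
  have haj_pos : 0 < aj := Real.sin_pos_of_pos_of_lt_pi hargj_pos (by linarith)
  have hai_le1 : ai ≤ 1 := Real.sin_le_one _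
  have haji : aj ≤ ai := by
    apply Real.sin_le_sin_of_le_of_le_pi_div_two (by linarith) (by linarith) hargji
  have haj_sq : aj ^ 2 ≤ 1 / 2 := by
    apply aux_ajsq haj_pos
    have h4 : aj ≤ Real.sin (Real.pi / 4) := by
      apply Real.sin_le_sin_of_le_of_le_pi_div_two (by linarith) (by linarith) hargj_le
    rwa [Real.sin_pi_div_four] at h4
  have haj_lb : 2 / 2 ^ j ≤ aj := by
    have := Real.mul_le_sin (x := Real.pi / 2 ^ j) hargj_pos.le (by linarith)
    rw [← haj_def] at this
    calc (2:ℝ) / 2 ^ j = 2 / Real.pi * (Real.pi / 2 ^ j) := by field_simp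
    _ ≤ aj := this
  have hs_pos : 0 < s := Real.sinh_pos_iff.2 (Nat.cast_pos.2 (by omega))
  have hexp : (2:ℝ) ^ r ≤ Real.exp r := by
    calc (2:ℝ) ^ r ≤ Real.exp 1 ^ r :=
      pow_le_pow_left₀ (by norm_num) (by have := Real.exp_one_gt_d9; linarith) r
    _ = Real.exp r := by rw [← Real.exp_nat_mul]; norm_num
  have hs_lb : (2:ℝ) ^ r ≤ 2 * s + 1 := by
    rw [hs_def, Real.sinh_eq]
    have h1 : Real.exp (-(r:ℝ)) ≤ 1 := Real.exp_le_one_iff.2 (neg_nonpos.2 (by positivity))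
    linarith
  have hcosh_lb : (2:ℝ) ^ r ≤ 2 * Real.cosh r := by
    rw [Real.cosh_eq]
    have h1 : 0 < Real.exp (-(r:ℝ)) := Real.exp_pos _
    linarith
  have hr4 : (4:ℝ) ≤ 2 ^ r := by
    calc (4:ℝ) = 2 ^ 2 := by norm_num
    _ ≤ 2 ^ r := pow_le_pow_right₀ (by norm_num) hr
  have hajr : (2:ℝ) / 2 ^ r ≤ aj := le_trans (by
      apply div_le_div_of_nonneg_left (by norm_num) (by positivity) h2jr) haj_lb
  have hajcosh : 1 ≤ aj * Real.cosh r := by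
    have h2 : (2:ℝ)^r / 2 ≤ Real.cosh r := by linarith
    calc (1:ℝ) = (2 / 2 ^ r) * (2 ^ r / 2) := by field_simp
    _ ≤ aj * Real.cosh r := by
      apply mul_le_mul hajr h2 (by positivity) haj_pos.le
  have hsaj : 1 ≤ 4 * s ^ 2 * aj := by
    have h2 : (2:ℝ)^r / 4 ≤ s := by linarith
    have h3 : ((2:ℝ)^r / 4) ^ 2 * (2 / 2^r) ≤ s ^ 2 * aj := by
      apply mul_le_mul (pow_le_pow_left₀ (by positivity) h2 2) hajr (by positivity) (by positivity)
    have h4 : ((2:ℝ)^r / 4) ^ 2 * (2 / 2^r) = 2 ^ r / 8 := by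
      field_simp; ring
    rw [h4] at h3
    linarith
  -- sinh/cosh of rho
  have hsj : Real.sinh (rho r j) = s / aj := by rw [rho]; exact Real.sinh_arsinh _
  have hcj : Real.cosh (rho r j) = Real.sqrt (1 + (s/aj)^2) := by
    rw [rho]; exact Real.cosh_arsinh _
  have hsi : Real.sinh (rho r i) = s / ai := by rw [rho]; exact Real.sinh_arsinh _
  have hci : Real.cosh (rho r i) = Real.sqrt (1 + (s/ai)^2) := by
    rw [rho]; exact Real.cosh_arsinh _
  have hM : Real.cosh (2 * (r:ℝ)) = 2 * s^2 + 1 := by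
    rw [Real.cosh_two_mul, Real.cosh_sq]; ring
  -- Step A
  have hBval : s / aj ≤ 2 * s * Real.cosh r := by
    rw [div_le_iff₀ haj_pos]
    have h : 2*s*1 ≤ 2*s*(aj*Real.cosh r) :=
      mul_le_mul_of_nonneg_left hajcosh (by positivity)
    linarith [h, hs_pos]
  have hcoshr_sq : Real.cosh r ^ 2 = s ^ 2 + 1 := by rw [Real.cosh_sq, hs_def]
  have stepA : Real.cosh (rho r j) ≤ 2 * s ^ 2 + 1 := by
    rw [hcj]
    exact aux_sqrt_le (by positivity) (aux_sqA (by positivity) hBval hcoshr_sq)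
  -- Step B
  have stepB := aux_stepB hai_pos haj_pos haji hai_le1 hsaj hs_pos
  -- cos Δ lower bound
  have hΔπ : 2 * Real.pi / 2 ^ j ≤ Real.pi := by
    have h1 : 2 * Real.pi / 2 ^ j ≤ 2 * Real.pi / 4 := by
      apply div_le_div_of_nonneg_left (by positivity) (by norm_num) h2j
    linarith
  have hcosΔ : 1 - 2 * aj ^ 2 ≤ Real.cos Δ := by
    have h1 : Real.cos (2 * Real.pi / 2 ^ j) ≤ Real.cos Δ :=
      Real.cos_le_cos_of_nonneg_of_le_pi hΔ₀ hΔπ hΔ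
    have h2 : Real.cos (2 * Real.pi / 2 ^ j) = 1 - 2 * aj ^ 2 := by
      rw [show 2 * Real.pi / 2 ^ j = 2 * (Real.pi / 2 ^ j) by ring,
        Real.cos_two_mul, Real.cos_sq']
      rw [← haj_def]; ring
    linarith
  -- assembly via convexity in u = exp ρ
  have hc0 : (0:ℝ) ≤ 1 - 2 * aj ^ 2 := by linarith
  have hc1 : (1:ℝ) - 2 * aj ^ 2 ≤ 1 := by linarith [sq_nonneg aj]
  have hB0 : (0:ℝ) ≤ s / aj := by positivity
  have hAB : s / aj ≤ Real.sqrt (1 + (s/aj)^2) := aux_self_le_sqrt hB0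
  have stepA' : Real.sqrt (1 + (s/aj)^2) ≤ 2 * s ^ 2 + 1 := by rw [← hcj]; exact stepA
  have hRend : Real.cosh (rho r i) * Real.sqrt (1 + (s/aj)^2)
      - Real.sinh (rho r i) * (s/aj * (1 - 2*aj^2)) ≤ 2 * s ^ 2 + 1 := by
    rw [hci, hsi]
    linarith [stepB]
  have key := aux_assemble hρ₀ hρ hB0 hc0 hc1 hAB stepA' hRend
  have hsρ : 0 ≤ Real.sinh ρ := by
    have := Real.sinh_le_sinh.2 hρ₀
    simpa using this
  have hmono : Real.sinh ρ * (s/aj) * (1 - 2*aj^2) ≤ Real.sinh ρ * (s/aj) * Real.cos Δ :=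
    mul_le_mul_of_nonneg_left hcosΔ (mul_nonneg hsρ hB0)
  rw [hM, hcj, hsj]
  linarith [key, hmono]
end

section
/- Let r ≥ 2 be an integer and let 2 ≤ i ≤ j ≤ r. In the graph G_r, every vertex of level i has at least 2 and at most 4·√(2^{j−i}) neighbors in level j; that is, for every m with 1 ≤ m ≤ 2^i, the number of m' with 1 ≤ m' ≤ 2^j such that (i, m) and (j, m') are distinct and adjacent in G_r is at least 2 and at most 4·2^{(j−i)/2}. -/
/-- Polar angle of the `m`-th vertex of level `k`. -/
noncomputable def theta (k m : ℕ) : ℝ :=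
  (2 * (m : ℝ) - 1) * Real.pi / 2 ^ k

/-- Vertices of `G_r`: the root (`none`) together with pairs `(k, m)`. -/
abbrev Vertex : Type := Option (ℕ × ℕ)

/-- The pairs `(k, m)` with `2 ≤ k ≤ r` and `1 ≤ m ≤ 2^k` (together with the
root) are the actual vertices of `G_r`. -/
def ValidVertex (r : ℕ) : Vertex → Prop
  | none => True
  | some (k, m) => 2 ≤ k ∧ k ≤ r ∧ 1 ≤ m ∧ m ≤ 2 ^ k

/-- Two vertices represent points at hyperbolic distance at most `2r`
(expressed via the hyperbolic law of cosines). -/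
def HypClose (r : ℕ) : Vertex → Vertex → Prop
  | none, none => False
  | none, some (k, _) => rho r k ≤ 2 * (r : ℝ)
  | some (k, _), none => rho r k ≤ 2 * (r : ℝ)
  | some (k, m), some (k', m') =>
      Real.cosh (rho r k) * Real.cosh (rho r k') -
          Real.sinh (rho r k) * Real.sinh (rho r k') *
            Real.cos (theta k m - theta k' m') ≤ Real.cosh (2 * (r : ℝ))

/-- The hyperbolic uniform disk graph `G_r` of the construction: two distinct
vertices are adjacent iff the corresponding points have hyperbolic distance at
most `2r`. -/
def Gr (r : ℕ) : SimpleGraph Vertex where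
  Adj u v := u ≠ v ∧ HypClose r u v
  symm := by
    constructor
    rintro (_ | ⟨k, m⟩) (_ | ⟨k', m'⟩) ⟨hne, h⟩
    · exact ⟨hne.symm, h⟩
    · exact ⟨hne.symm, h⟩
    · exact ⟨hne.symm, h⟩
    · refine ⟨hne.symm, ?_⟩
      simp only [HypClose] at h ⊢
      have hc : Real.cos (theta k' m' - theta k m) = Real.cos (theta k m - theta k' m') := by
        rw [show theta k' m' - theta k m = -(theta k m - theta k' m') by ring, Real.cos_neg]
      have h1 : Real.cosh (rho r k') * Real.cosh (rho r k) =
          Real.cosh (rho r k) * Real.cosh (rho r k') := mul_comm _ _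
      have h2 : Real.sinh (rho r k') * Real.sinh (rho r k) =
          Real.sinh (rho r k) * Real.sinh (rho r k') := mul_comm _ _
      rw [hc, h1, h2]
      exact h
  loopless := by
    constructor
    rintro v ⟨hne, _⟩
    exact hne rfl


/-!
Write `s = sinh r` and `c_k = sin (π / 2^k)`, so that `sinh ρ_k = s / c_k`. After multiplying by
`c_i c_j`, adjacency of `(i, m)` and `(j, m')` reads
`√((c_i² + s²)(c_j² + s²)) - s² cos Δ ≤ (1 + 2s²) c_i c_j`,
where `Δ = θ_{i,m} - θ_{j,m'} = v π / 2^j` for an integer `v` determined by `m'`.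

Upper bound: `√((c_i² + s²)(c_j² + s²)) ≥ s² + c_i c_j` gives the necessary condition
`1 - cos Δ ≤ 2 c_i c_j ≤ 2π² / 2^{i+j}`. Reducing `v` modulo `2^{j+1}` into `[-2^j, 2^j]` and using
`cos x ≤ 1 - 2x²/π²` on `[-π, π]` gives `|v| ≤ π 2^{(j-i)/2}`. The reduced values are distinct and
all of one parity, so there are at most `⌊π 2^{(j-i)/2}⌋ + 1 ≤ 4 · 2^{(j-i)/2}` of them.

Lower bound: by AM-GM, `(c_i - c_j)²/2 + s²(1 - cos Δ) ≤ 2 s² c_i c_j` suffices for adjacency. It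
holds with equality for `v ≡ ±2` when `i = j`, and for `v = ±1` when `i < j` by Jordan's inequality
and `s² ≥ 2^{j-i}`; the two values of `v` come from two distinct `m'`.
-/

open Real

lemma pi_div_two_pow_le_pi_div_two {k : ℕ} (hk : 1 ≤ k) : π / 2 ^ k ≤ π / 2 :=
  div_le_div_of_nonneg_left pi_pos.le two_pos (le_self_pow₀ one_le_two (by omega))

lemma sin_pi_div_two_pow_pos {k : ℕ} (hk : 1 ≤ k) : 0 < sin (π / 2 ^ k) :=
  sin_pos_of_pos_of_lt_pi (by positivity)
    ((pi_div_two_pow_le_pi_div_two hk).trans_lt (by linarith [pi_pos]))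

lemma pi_div_two_pow_eq {i j : ℕ} (hij : i ≤ j) : π / 2 ^ i = 2 ^ (j - i) * (π / 2 ^ j) := by
  rw [pow_sub₀ _ two_ne_zero hij]
  field_simp

lemma two_rpow_half_sq (k : ℕ) : ((2 : ℝ) ^ ((k : ℝ) / 2)) ^ 2 = 2 ^ k := by
  rw [← Real.rpow_mul_natCast zero_le_two, ← Real.rpow_natCast]
  norm_num

lemma two_pow_le_sinh_sq {k r : ℕ} (h : k + 2 ≤ r) : (2 : ℝ) ^ k ≤ sinh r ^ 2 := by
  have hexp : (2 : ℝ) ^ r ≤ exp r := by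
    rw [← exp_one_pow]
    gcongr
    linarith [add_one_le_exp (1 : ℝ)]
  have hsinh : ((2 : ℝ) ^ r - 1) / 2 ≤ sinh r := by
    rw [sinh_eq]
    linarith [exp_le_one_iff.2 (neg_nonpos.2 (Nat.cast_nonneg (α := ℝ) r))]
  have hpow : 4 * (2 : ℝ) ^ k ≤ 2 ^ r := by
    calc 4 * (2 : ℝ) ^ k = 2 ^ (k + 2) := by ring
      _ ≤ 2 ^ r := pow_le_pow_right₀ one_le_two h
  have hX : (2 : ℝ) ^ r - 1 ≤ 2 * sinh r := by linarith
  have h4 : (4 : ℝ) ≤ 2 ^ r := by linarith [one_le_pow₀ (one_le_two (α := ℝ)) (n := k)]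
  have hsq : (2 : ℝ) ^ r ≤ (2 ^ r - 1) ^ 2 := by nlinarith
  nlinarith [mul_le_mul hX hX (by linarith) (by linarith)]

lemma cosh_arsinh_mul_sub_le_cosh_two_mul_iff {t c d x : ℝ} (hc : 0 < c) (hd : 0 < d) :
    cosh (arsinh (sinh t / c)) * cosh (arsinh (sinh t / d)) -
        sinh (arsinh (sinh t / c)) * sinh (arsinh (sinh t / d)) * cos x ≤ cosh (2 * t) ↔
      √((c ^ 2 + sinh t ^ 2) * (d ^ 2 + sinh t ^ 2)) - sinh t ^ 2 * cos x ≤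
        (1 + 2 * sinh t ^ 2) * (c * d) := by
  set s := sinh t
  have hscale : ∀ {y : ℝ}, 0 < y → √(1 + (s / y) ^ 2) * y = √(y ^ 2 + s ^ 2) := fun hy => by
    rw [← sqrt_sq hy.le, ← Real.sqrt_mul (by positivity), sqrt_sq hy.le]
    congr 1
    field_simp
  rw [sinh_arsinh, sinh_arsinh, cosh_arsinh, cosh_arsinh, cosh_two_mul, cosh_sq,
    ← mul_le_mul_iff_of_pos_right (mul_pos hc hd), Real.sqrt_mul (by positivity),
    ← hscale hc, ← hscale hd]
  constructor <;> intro h <;> field_simp at h ⊢ <;> linarith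

lemma one_sub_cos_le_of_sqrt_sub_mul_cos_le {s c d x : ℝ} (hs : s ≠ 0) (hcd : 0 ≤ c * d)
    (h : √((c ^ 2 + s ^ 2) * (d ^ 2 + s ^ 2)) - s ^ 2 * cos x ≤ (1 + 2 * s ^ 2) * (c * d)) :
    1 - cos x ≤ 2 * (c * d) := by
  have hsqrt : s ^ 2 + c * d ≤ √((c ^ 2 + s ^ 2) * (d ^ 2 + s ^ 2)) := by
    rw [Real.le_sqrt (by positivity) (by positivity)]
    nlinarith [sq_nonneg (s * (c - d))]
  have : s ^ 2 * (1 - cos x) ≤ s ^ 2 * (2 * (c * d)) := by linarith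
  exact le_of_mul_le_mul_left this (by positivity)

lemma sqrt_sub_mul_cos_le_of_le {s c d x : ℝ}
    (h : (c - d) ^ 2 / 2 + s ^ 2 * (1 - cos x) ≤ 2 * s ^ 2 * (c * d)) :
    √((c ^ 2 + s ^ 2) * (d ^ 2 + s ^ 2)) - s ^ 2 * cos x ≤ (1 + 2 * s ^ 2) * (c * d) := by
  have hsqrt : √((c ^ 2 + s ^ 2) * (d ^ 2 + s ^ 2)) ≤ (c ^ 2 + d ^ 2) / 2 + s ^ 2 :=
    Real.sqrt_le_iff.2 ⟨by positivity, by nlinarith [sq_nonneg (c ^ 2 - d ^ 2)]⟩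
  linarith

lemma sq_sin_sub_sin_div_two_add_le {a b s : ℝ} (hb : 0 < b) (hab : 2 * b ≤ a)
    (ha : a ≤ π / 2) (has : a ≤ s ^ 2 * b) :
    (sin a - sin b) ^ 2 / 2 + s ^ 2 * (1 - cos b) ≤ 2 * s ^ 2 * (sin a * sin b) := by
  have hsa : 2 / π * a ≤ sin a := mul_le_sin (by linarith) ha
  have hsb : 2 / π * b ≤ sin b := mul_le_sin hb.le (by linarith)
  have hsa' : sin a ≤ a := sin_le (by linarith)
  have hsb' : sin b ≤ b := sin_le hb.le
  have ha0 : 0 < a := by linarith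
  have hsa0 : 0 ≤ sin a := le_trans (by positivity) hsa
  have hsb0 : 0 ≤ sin b := le_trans (by positivity) hsb
  have hdiff : (sin a - sin b) ^ 2 ≤ s ^ 2 * (a * b) := by
    have : (sin a - sin b) ^ 2 ≤ a ^ 2 := by
      nlinarith [mul_nonneg (by linarith : 0 ≤ a - sin a + sin b)
        (by linarith : 0 ≤ a + sin a - sin b)]
    nlinarith
  have hcos : s ^ 2 * (1 - cos b) ≤ s ^ 2 * (a * b) / 4 := by
    have := one_sub_sq_div_two_le_cos (x := b)
    nlinarith [sq_nonneg s]
  -- Jordan's inequality, with `4 / π ^ 2 ≥ 3 / 8`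
  have hprod : 3 / 8 * (a * b) ≤ sin a * sin b := by
    have hπ : 3 / 8 ≤ 4 / π ^ 2 := by
      rw [div_le_div_iff₀ (by norm_num) (by positivity)]
      nlinarith [pi_lt_d2, pi_pos]
    calc 3 / 8 * (a * b) ≤ 4 / π ^ 2 * (a * b) := by gcongr
      _ = (2 / π * a) * (2 / π * b) := by ring
      _ ≤ sin a * sin b := mul_le_mul hsa hsb (by positivity) (by linarith)
  nlinarith [sq_nonneg s]

lemma cos_int_mul_pi_div_eq_of_modEq {n u v : ℤ} (hn : n ≠ 0) (h : u ≡ v [ZMOD 2 * n]) :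
    cos (u * π / n) = cos (v * π / n) := by
  obtain ⟨k, hk⟩ := Int.modEq_iff_dvd.1 h.symm
  rw [show u = v + 2 * n * k by linarith, ← cos_add_int_mul_two_pi (v * π / n) k]
  congr 1
  push_cast
  field_simp

lemma Int.exists_sub_two_mul_modEq {C u : ℤ} {n : ℕ} (hn : 0 < n) (h : 2 ∣ C - u) :
    ∃ k : ℕ, 1 ≤ k ∧ k ≤ n ∧ C - 2 * k ≡ u [ZMOD 2 * n] := by
  obtain ⟨q, hq⟩ := h
  have hr0 : 0 ≤ (q - 1) % n := Int.emod_nonneg _ (by omega)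
  have hrn : (q - 1) % n < n := Int.emod_lt_of_pos _ (by omega)
  refine ⟨((q - 1) % n).toNat + 1, by omega, by omega, ?_⟩
  have hmod : 2 * ((q - 1) % n) ≡ 2 * (q - 1) [ZMOD 2 * n] := (Int.mod_modEq _ _).mul_left'
  have : C - 2 * ((((q - 1) % n).toNat + 1 : ℕ) : ℤ) = u + 2 * q - 2 - 2 * ((q - 1) % n) := by
    push_cast
    rw [Int.toNat_of_nonneg hr0]
    linarith
  rw [this]
  calc u + 2 * q - 2 - 2 * ((q - 1) % n) ≡ u + 2 * q - 2 - 2 * (q - 1) [ZMOD 2 * n] :=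
        Int.ModEq.sub_left _ hmod
    _ = u := by ring

lemma ncard_le_of_injOn_natAbs_le {α : Type*} {s : Set α} {f : α → ℤ} {e : ℤ} {n : ℕ}
    (hinj : s.InjOn f) (hf : ∀ a ∈ s, (f a).natAbs ≤ n ∧ f a ≡ e [ZMOD 2]) :
    s.ncard ≤ n + 1 := by
  -- the values `f a` have the parity of `e`, so halving `f a + n` is injective
  have key := Set.ncard_le_ncard_of_injOn (fun a => ((f a + n) / 2).toNat)
    (t := Finset.range (n + 1)) (fun a ha => by
      have := (hf a ha).1
      simp only [Finset.coe_range, Set.mem_Iio]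
      omega)
    (fun a ha b hb hab => hinj ha hb (by
      have ha' := hf a ha
      have hb' := hf b hb
      simp only [Int.ModEq] at ha' hb' hab
      omega))
  simpa using key

lemma Int.bmod_modEq (x : ℤ) (n : ℕ) : x.bmod n ≡ x [ZMOD n] :=
  Int.bmod_emod

lemma Int.abs_bmod_two_pow_succ_le (x : ℤ) (j : ℕ) : |x.bmod (2 ^ (j + 1))| ≤ 2 ^ j := by
  have hN : ((2 ^ (j + 1) : ℕ) : ℤ) = 2 * 2 ^ j := by push_cast; ring
  have h1 := Int.le_bmod (x := x) (m := 2 ^ (j + 1)) (by positivity)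
  have h2 := Int.bmod_lt (x := x) (m := 2 ^ (j + 1)) (by positivity)
  rw [hN] at h1 h2
  rw [abs_le]
  omega

def thetaDiffNum (i j m m' : ℕ) : ℤ := 2 ^ (j - i) * (2 * m - 1) + 1 - 2 * m'

def levelNeighbors (r i j m : ℕ) : Set ℕ :=
  {m' | 1 ≤ m' ∧ m' ≤ 2 ^ j ∧ (Gr r).Adj (some (i, m)) (some (j, m'))}

section

variable {r i j m m' : ℕ}

lemma theta_sub_theta (hij : i ≤ j) :
    theta i m - theta j m' = thetaDiffNum i j m m' * π / 2 ^ j := by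
  have h2j : (2 : ℝ) ^ j = 2 ^ (j - i) * 2 ^ i := by rw [← pow_add, Nat.sub_add_cancel hij]
  rw [theta, theta, thetaDiffNum, h2j]
  push_cast
  field_simp
  ring

lemma thetaDiffNum_eq_sub : thetaDiffNum i j m m' = thetaDiffNum i j m 0 - 2 * m' := by
  simp [thetaDiffNum]

lemma cos_theta_sub_theta_of_modEq (hij : i ≤ j) {u : ℤ}
    (h : thetaDiffNum i j m m' ≡ u [ZMOD 2 ^ (j + 1)]) :
    cos (theta i m - theta j m') = cos (u * π / 2 ^ j) := by
  rw [pow_succ'] at h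
  simpa [theta_sub_theta hij] using cos_int_mul_pi_div_eq_of_modEq (by positivity) h

lemma hypClose_iff (hi : 1 ≤ i) (hj : 1 ≤ j) :
    HypClose r (some (i, m)) (some (j, m')) ↔
      √((sin (π / 2 ^ i) ^ 2 + sinh r ^ 2) * (sin (π / 2 ^ j) ^ 2 + sinh r ^ 2)) -
          sinh r ^ 2 * cos (theta i m - theta j m') ≤
        (1 + 2 * sinh r ^ 2) * (sin (π / 2 ^ i) * sin (π / 2 ^ j)) :=
  cosh_arsinh_mul_sub_le_cosh_two_mul_iff (sin_pi_div_two_pow_pos hi) (sin_pi_div_two_pow_pos hj)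

lemma HypClose.one_sub_cos_le (hr : 1 ≤ r) (hi : 1 ≤ i) (hj : 1 ≤ j)
    (h : HypClose r (some (i, m)) (some (j, m'))) :
    1 - cos (theta i m - theta j m') ≤ 2 * (sin (π / 2 ^ i) * sin (π / 2 ^ j)) :=
  one_sub_cos_le_of_sqrt_sub_mul_cos_le (sinh_pos_iff.2 (by exact_mod_cast hr)).ne'
    (mul_pos (sin_pi_div_two_pow_pos hi) (sin_pi_div_two_pow_pos hj)).le
    ((hypClose_iff hi hj).1 h)

lemma hypClose_of_le (hi : 1 ≤ i) (hj : 1 ≤ j)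
    (h : (sin (π / 2 ^ i) - sin (π / 2 ^ j)) ^ 2 / 2 +
        sinh r ^ 2 * (1 - cos (theta i m - theta j m')) ≤
      2 * sinh r ^ 2 * (sin (π / 2 ^ i) * sin (π / 2 ^ j))) :
    HypClose r (some (i, m)) (some (j, m')) :=
  (hypClose_iff hi hj).2 (sqrt_sub_mul_cos_le_of_le h)

lemma levelNeighbors_finite : (levelNeighbors r i j m).Finite :=
  (Set.finite_Icc 1 (2 ^ j)).subset fun _ h => ⟨h.1, h.2.1⟩

lemma mem_levelNeighbors_of_modEq (hi : 1 ≤ i) (hij : i ≤ j) {u : ℤ} (hu0 : u ≠ 0)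
    (hu : |u| < 2 ^ (j + 1)) (hm'1 : 1 ≤ m') (hm'2 : m' ≤ 2 ^ j)
    (hmod : thetaDiffNum i j m m' ≡ u [ZMOD 2 ^ (j + 1)])
    (hclose : (sin (π / 2 ^ i) - sin (π / 2 ^ j)) ^ 2 / 2 +
        sinh r ^ 2 * (1 - cos (u * π / 2 ^ j)) ≤
      2 * sinh r ^ 2 * (sin (π / 2 ^ i) * sin (π / 2 ^ j))) :
    m' ∈ levelNeighbors r i j m := by
  refine ⟨hm'1, hm'2, fun hv => hu0 ?_, hypClose_of_le hi (hi.trans hij) ?_⟩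
  · obtain ⟨rfl, rfl⟩ := Prod.mk.inj (Option.some.inj hv)
    rw [show thetaDiffNum i i m m = 0 by simp [thetaDiffNum]] at hmod
    exact Int.eq_zero_of_abs_lt_dvd (Int.modEq_zero_iff_dvd.1 hmod.symm) hu
  · rwa [cos_theta_sub_theta_of_modEq hij hmod]

lemma one_lt_ncard_levelNeighbors_of_modEq (hi : 1 ≤ i) (hij : i ≤ j) {u : ℤ} (hu0 : 0 < u)
    (hu : u < 2 ^ j) (hpar : 2 ∣ thetaDiffNum i j m 0 - u)
    (hclose : (sin (π / 2 ^ i) - sin (π / 2 ^ j)) ^ 2 / 2 +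
        sinh r ^ 2 * (1 - cos (u * π / 2 ^ j)) ≤
      2 * sinh r ^ 2 * (sin (π / 2 ^ i) * sin (π / 2 ^ j))) :
    1 < (levelNeighbors r i j m).ncard := by
  have hpow : (2 : ℤ) ^ (j + 1) = 2 * 2 ^ j := pow_succ' _ _
  have hpar' : 2 ∣ thetaDiffNum i j m 0 - -u := by
    simpa [sub_add_eq_add_sub, two_mul, add_sub_assoc] using dvd_add hpar (dvd_mul_right 2 u)
  obtain ⟨k₁, hk₁, hk₁', hmod₁⟩ := Int.exists_sub_two_mul_modEq (n := 2 ^ j) (by positivity) hpar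
  obtain ⟨k₂, hk₂, hk₂', hmod₂⟩ := Int.exists_sub_two_mul_modEq (n := 2 ^ j) (by positivity) hpar'
  push_cast [← hpow, ← thetaDiffNum_eq_sub] at hmod₁ hmod₂
  have hmem₁ : k₁ ∈ levelNeighbors r i j m :=
    mem_levelNeighbors_of_modEq hi hij hu0.ne' (by rw [abs_of_pos hu0]; omega) hk₁ hk₁' hmod₁
      hclose
  have hmem₂ : k₂ ∈ levelNeighbors r i j m :=
    mem_levelNeighbors_of_modEq hi hij (neg_ne_zero.2 hu0.ne')
      (by rw [abs_neg, abs_of_pos hu0]; omega) hk₂ hk₂' hmod₂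
      (by simpa [neg_mul, neg_div] using hclose)
  refine (Set.one_lt_ncard levelNeighbors_finite).2 ⟨k₁, hmem₁, k₂, hmem₂, fun h => ?_⟩
  subst h
  have h2u := Int.eq_zero_of_abs_lt_dvd (hmod₂.symm.trans hmod₁).dvd
    (by rw [hpow, abs_of_pos (by omega)]; omega)
  omega

lemma one_lt_ncard_levelNeighbors_self (hi : 2 ≤ i) : 1 < (levelNeighbors r i i m).ncard := by
  refine one_lt_ncard_levelNeighbors_of_modEq (u := 2) (by omega) le_rfl two_pos ?_ ⟨m - 1, ?_⟩ ?_
  · calc (2 : ℤ) < 2 ^ 2 := by norm_num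
      _ ≤ 2 ^ i := pow_le_pow_right₀ one_le_two hi
  · rw [thetaDiffNum, Nat.sub_self, pow_zero]
    ring
  · have hcos : 1 - cos (2 * (π / 2 ^ i)) = 2 * sin (π / 2 ^ i) ^ 2 := by
      rw [cos_two_mul, cos_sq']
      ring
    push_cast
    rw [mul_div_assoc, hcos]
    exact le_of_eq (by ring)

lemma one_lt_ncard_levelNeighbors_of_lt (hi : 2 ≤ i) (hij : i < j) (hjr : j ≤ r) :
    1 < (levelNeighbors r i j m).ncard := by
  have hK : (2 : ℝ) ≤ 2 ^ (j - i) := le_self_pow₀ one_le_two (by omega)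
  have hb : 0 < π / 2 ^ j := by positivity
  refine one_lt_ncard_levelNeighbors_of_modEq (u := 1) (by omega) hij.le one_pos
    (one_lt_pow₀ one_lt_two (by omega)) ⟨2 ^ (j - i - 1) * (2 * m - 1), ?_⟩ ?_
  · have hpow : (2 : ℤ) ^ (j - i) = 2 * 2 ^ (j - i - 1) := by
      rw [← pow_succ']
      congr 1
      omega
    rw [thetaDiffNum, hpow]
    ring
  · rw [Int.cast_one, one_mul]
    apply sq_sin_sub_sin_div_two_add_le hb
    · rw [pi_div_two_pow_eq hij.le]
      nlinarith
    · exact pi_div_two_pow_le_pi_div_two (by omega)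
    · rw [pi_div_two_pow_eq hij.le]
      exact mul_le_mul_of_nonneg_right (two_pow_le_sinh_sq (by omega)) hb.le

lemma HypClose.abs_bmod_thetaDiffNum_le (hr : 1 ≤ r) (hi : 1 ≤ i) (hij : i ≤ j)
    (h : HypClose r (some (i, m)) (some (j, m'))) :
    |((thetaDiffNum i j m m').bmod (2 ^ (j + 1)) : ℝ)| ≤ π * 2 ^ (((j - i : ℕ) : ℝ) / 2) := by
  set w := (thetaDiffNum i j m m').bmod (2 ^ (j + 1))
  set b := π / 2 ^ j
  have hb : 0 < b := by positivity
  have hmod : thetaDiffNum i j m m' ≡ w [ZMOD 2 ^ (j + 1)] := by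
    simpa using (Int.bmod_modEq (thetaDiffNum i j m m') (2 ^ (j + 1))).symm
  have hclose := h.one_sub_cos_le hr hi (hi.trans hij)
  rw [cos_theta_sub_theta_of_modEq hij hmod, mul_div_assoc] at hclose
  have hquad : cos (w * b) ≤ 1 - 2 / π ^ 2 * (w * b) ^ 2 := by
    apply cos_le_one_sub_mul_cos_sq
    have hw : |(w : ℝ)| ≤ 2 ^ j := by exact_mod_cast Int.abs_bmod_two_pow_succ_le _ j
    calc |(w : ℝ) * b| = |(w : ℝ)| * b := by rw [abs_mul, abs_of_pos hb]
      _ ≤ 2 ^ j * b := by gcongr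
      _ = π := by simp only [b]; field_simp
  have hsin : sin (π / 2 ^ i) * sin b ≤ 2 ^ (j - i) * b * b := by
    rw [pi_div_two_pow_eq hij]
    exact mul_le_mul (sin_le (by positivity)) (sin_le hb.le) (sin_nonneg_of_nonneg_of_le_pi hb.le
      (div_le_self pi_pos.le (one_le_pow₀ one_le_two))) (by positivity)
  refine abs_le_of_sq_le_sq ?_ (by positivity)
  rw [mul_pow, two_rpow_half_sq]
  refine le_of_mul_le_mul_right ?_ (by positivity : 0 < 2 / π ^ 2 * b ^ 2)
  calc (w : ℝ) ^ 2 * (2 / π ^ 2 * b ^ 2) = 2 / π ^ 2 * (w * b) ^ 2 := by ring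
    _ ≤ 2 * (2 ^ (j - i) * b * b) := by linarith
    _ = π ^ 2 * 2 ^ (j - i) * (2 / π ^ 2 * b ^ 2) := by field_simp

lemma ncard_levelNeighbors_le (hr : 1 ≤ r) (hi : 1 ≤ i) (hij : i ≤ j) :
    (levelNeighbors r i j m).ncard ≤ ⌊π * 2 ^ (((j - i : ℕ) : ℝ) / 2)⌋₊ + 1 := by
  have hbmod (x : ℤ) : x.bmod (2 ^ (j + 1)) ≡ x [ZMOD 2 ^ (j + 1)] := by
    simpa using Int.bmod_modEq x (2 ^ (j + 1))
  refine ncard_le_of_injOn_natAbs_le (f := fun m' => (thetaDiffNum i j m m').bmod (2 ^ (j + 1)))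
    (e := thetaDiffNum i j m 0) ?_ fun m' hm' => ⟨?_, ?_⟩
  · rintro k₁ ⟨hk₁, hk₁', -⟩ k₂ ⟨hk₂, hk₂', -⟩ heq
    have hmod := (hbmod _).symm.trans ((congrArg (· ≡ _ [ZMOD _]) heq).mp (hbmod _))
    rw [thetaDiffNum_eq_sub (m' := k₁), thetaDiffNum_eq_sub (m' := k₂)] at hmod
    have h2 : (2 : ℤ) ^ (j + 1) = 2 * 2 ^ j := pow_succ' _ _
    have := Int.eq_zero_of_abs_lt_dvd hmod.dvd (by
      have h₁ : (k₁ : ℤ) ≤ 2 ^ j := by exact_mod_cast hk₁'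
      have h₂ : (k₂ : ℤ) ≤ 2 ^ j := by exact_mod_cast hk₂'
      rw [abs_lt, h2]
      omega)
    omega
  · apply Nat.le_floor
    rw [Nat.cast_natAbs, Int.cast_abs]
    exact hm'.2.2.2.abs_bmod_thetaDiffNum_le hr hi hij
  · have hmod := hbmod (thetaDiffNum i j m m')
    rw [pow_succ] at hmod
    refine (hmod.of_mul_left _).trans (Int.modEq_iff_dvd.2 ⟨m', ?_⟩)
    rw [thetaDiffNum_eq_sub (m' := m')]
    ring

end

lemma floor_pi_mul_two_rpow_half_add_one_le (k : ℕ) :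
    ((⌊π * 2 ^ ((k : ℝ) / 2)⌋₊ + 1 : ℕ) : ℝ) ≤ 4 * 2 ^ ((k : ℝ) / 2) := by
  rcases k.eq_zero_or_pos with rfl | hk
  · have : ⌊π⌋₊ < 4 := Nat.floor_lt pi_pos.le |>.2 (by norm_num; linarith [pi_lt_d2])
    simp only [CharP.cast_eq_zero, zero_div, rpow_zero, mul_one]
    exact_mod_cast (by omega : ⌊π⌋₊ + 1 ≤ 4)
  · set t := (2 : ℝ) ^ ((k : ℝ) / 2)
    have ht : 2 ≤ t ^ 2 := by
      rw [two_rpow_half_sq]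
      exact le_self_pow₀ one_le_two hk.ne'
    have ht0 : 0 ≤ t := by positivity
    push_cast
    nlinarith [Nat.floor_le (by positivity : 0 ≤ π * t), pi_lt_d2]

theorem Gr_neighbors_general (r i j m : ℕ) (hi : 2 ≤ i) (hij : i ≤ j) (hjr : j ≤ r) :
    2 ≤ {m' : ℕ | 1 ≤ m' ∧ m' ≤ 2 ^ j ∧ (Gr r).Adj (some (i, m)) (some (j, m'))}.ncard ∧
      ({m' : ℕ | 1 ≤ m' ∧ m' ≤ 2 ^ j ∧ (Gr r).Adj (some (i, m)) (some (j, m'))}.ncard : ℝ) ≤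
        4 * (2 : ℝ) ^ (((j : ℝ) - (i : ℝ)) / 2) := by
  change 1 < (levelNeighbors r i j m).ncard ∧ ((levelNeighbors r i j m).ncard : ℝ) ≤ _
  refine ⟨?_, ?_⟩
  · rcases hij.eq_or_lt with rfl | hlt
    · exact one_lt_ncard_levelNeighbors_self hi
    · exact one_lt_ncard_levelNeighbors_of_lt hi hlt hjr
  · rw [← Nat.cast_sub hij]
    exact (Nat.cast_le.2 (ncard_levelNeighbors_le (by omega) (by omega) hij)).trans
      (floor_pi_mul_two_rpow_half_add_one_le _)

/-- Lemma 13 (Gr_neighbors): every level-`i` vertex of `G_r` has at least `2`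
and at most `4·√(2^{j−i})` neighbors in level `j`, for `2 ≤ i ≤ j ≤ r`. -/
theorem Gr_neighbors (r i j m : ℕ) (hr : 2 ≤ r) (hi : 2 ≤ i) (hij : i ≤ j) (hjr : j ≤ r)
    (hm1 : 1 ≤ m) (hm2 : m ≤ 2 ^ i) :
    2 ≤ {m' : ℕ | 1 ≤ m' ∧ m' ≤ 2 ^ j ∧ (Gr r).Adj (some (i, m)) (some (j, m'))}.ncard ∧
      ({m' : ℕ | 1 ≤ m' ∧ m' ≤ 2 ^ j ∧ (Gr r).Adj (some (i, m)) (some (j, m'))}.ncard : ℝ) ≤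
        4 * (2 : ℝ) ^ (((j : ℝ) - (i : ℝ)) / 2) :=
  Gr_neighbors_general r i j m hi hij hjr
end

section
/- Let r ≥ 2 be an integer. If three vertices (i, m_i), (j, m_j), (k, m_k) of the graph G_r with levels 2 ≤ i ≤ j ≤ k ≤ r are pairwise adjacent in G_r (i.e., they form a triangle), then k − j ≤ j − i + 6. -/
/-!
By the law of cosines and `sinh ρ_a = sinh r / sin (π / 2^a)`, an edge between levels `a` and
`b` whose endpoints differ in angle by `φ` forces
`sin² (φ / 2) ≤ sin (π / 2^a) sin (π / 2^b) ≤ π² / 2^(a+b)`.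
In a triangle let `A`, `B` be the half angle differences of the edges `ik` and `jk`; both have
`sin² ≤ π² / 2^(i+k)`. Their difference `A - B` is half the angle between the distinct vertices
`(i, m_i)` and `(j, m_j)`, a multiple of `π / 2^(j+1)` but not of `π`, so
`|sin (A - B)| ≥ sin (π / 2^(j+1)) ≥ 2^(-j)`. As `sin² (A - B) ≤ 2 (sin² A + sin² B)`, this gives
`4^(-j) ≤ 4π² / 2^(i+k) < 2^(6-i-k)`.
-/

open Real

-- The left side of `h` is `cosh (x - y) + 2 sinh x sinh y sin² (φ / 2)`.
lemma sinh_mul_sinh_mul_sin_sq_half_le {x y φ t : ℝ}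
    (h : cosh x * cosh y - sinh x * sinh y * cos φ ≤ cosh (2 * t)) :
    sinh x * sinh y * sin (φ / 2) ^ 2 ≤ sinh t ^ 2 := by
  have hcos : cos φ = 1 - 2 * sin (φ / 2) ^ 2 := by
    rw [← cos_two_mul_eq_one_sub, mul_div_cancel₀ _ two_ne_zero]
  have hcosh : cosh (2 * t) = 1 + 2 * sinh t ^ 2 := by
    rw [cosh_two_mul, cosh_sq]; ring
  have hdist : 1 ≤ cosh x * cosh y - sinh x * sinh y := by
    rw [← cosh_sub]; exact one_le_cosh _
  rw [hcos, hcosh] at h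
  linarith

lemma sin_pi_div_le_abs_sin_int_mul_pi_div {n : ℕ} {q : ℤ} (hq : ¬ (n : ℤ) ∣ q) :
    sin (π / n) ≤ |sin (q * π / n)| := by
  rcases Nat.eq_zero_or_pos n with rfl | hn
  · simp
  have hn' : (0 : ℝ) < n := Nat.cast_pos.2 hn
  have hshift : q * π / n = (q % n : ℤ) * π / n + (q / n : ℤ) * π := by
    conv_lhs => rw [← Int.emod_add_mul_ediv q n]
    push_cast
    field_simp
  set b := q % n
  have hb_pos : 0 < b := lt_of_le_of_ne (Int.emod_nonneg q (by omega))
    (fun h => hq (Int.dvd_of_emod_eq_zero h.symm))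
  have hb_lt : b < n := Int.emod_lt_of_pos q (by omega)
  have hn2 : (2 : ℝ) ≤ n := by exact_mod_cast (by omega : 2 ≤ (n : ℤ))
  have hpin : π / n ≤ π / 2 := by gcongr
  have hpin0 : 0 < π / n := by positivity
  have hlow : π / n ≤ b * π / n := by
    gcongr
    exact le_mul_of_one_le_left pi_pos.le (by exact_mod_cast hb_pos)
  have hhigh : b * π / n ≤ π - π / n := by
    rw [div_le_iff₀ hn', sub_mul, div_mul_cancel₀ _ hn'.ne']
    have : (b : ℝ) + 1 ≤ n := by exact_mod_cast hb_lt
    nlinarith [pi_pos]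
  have hmin := strictConcaveOn_sin_Icc.concaveOn.min_le_of_mem_Icc
    (x := π / n) (y := π - π / n) ⟨hpin0.le, by linarith⟩ ⟨by linarith, by linarith⟩
    ⟨hlow, hhigh⟩
  rw [sin_pi_sub, min_self] at hmin
  rw [hshift, sin_add_int_mul_pi, abs_mul, abs_neg_one_zpow, one_mul]
  exact hmin.trans (le_abs_self _)

lemma sin_sub_sq_le (x y : ℝ) : sin (x - y) ^ 2 ≤ 2 * (sin x ^ 2 + sin y ^ 2) := by
  rw [sin_sub]
  nlinarith [sin_sq_add_cos_sq x, sin_sq_add_cos_sq y, sq_nonneg (sin x * cos y + cos x * sin y),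
    sq_nonneg (sin x - sin y), sq_nonneg (sin x + sin y)]

lemma sin_sq_half_theta_sub_le {r a b ma mb : ℕ} (hr : 0 < r) (ha : 1 ≤ a) (hb : 1 ≤ b)
    (h : HypClose r (some (a, ma)) (some (b, mb))) :
    sin ((theta a ma - theta b mb) / 2) ^ 2 ≤ π ^ 2 / 2 ^ (a + b) := by
  have hσa := sin_pi_div_two_pow_pos ha
  have hσb := sin_pi_div_two_pow_pos hb
  have hs : 0 < sinh (r : ℝ) ^ 2 := by positivity
  have hsinh := sinh_mul_sinh_mul_sin_sq_half_le h
  simp only [rho, sinh_arsinh] at hsinh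
  have hsin : sin ((theta a ma - theta b mb) / 2) ^ 2 ≤ sin (π / 2 ^ a) * sin (π / 2 ^ b) := by
    rw [div_mul_div_comm, ← sq, div_mul_eq_mul_div, div_le_iff₀ (mul_pos hσa hσb)] at hsinh
    exact le_of_mul_le_mul_left hsinh hs
  calc _ ≤ sin (π / 2 ^ a) * sin (π / 2 ^ b) := hsin
    _ ≤ (π / 2 ^ a) * (π / 2 ^ b) := by
      gcongr
      · exact sin_le (by positivity)
      · exact sin_le (by positivity)
    _ = π ^ 2 / 2 ^ (a + b) := by rw [pow_add]; ring

lemma theta_sub_theta_div_two {a b : ℕ} (hab : a ≤ b) (ma mb : ℕ) :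
    (theta a ma - theta b mb) / 2 =
      (((2 * ma - 1) * 2 ^ (b - a) - (2 * mb - 1) : ℤ) : ℝ) * π / (2 ^ (b + 1) : ℕ) := by
  obtain ⟨d, rfl⟩ := Nat.exists_eq_add_of_le hab
  simp only [theta, Nat.add_sub_cancel_left]
  push_cast
  field_simp
  ring

lemma not_two_pow_succ_dvd_theta_numerator {a b ma mb : ℕ} (hab : a ≤ b)
    (hma : 1 ≤ ma ∧ ma ≤ 2 ^ a) (hmb : 1 ≤ mb ∧ mb ≤ 2 ^ b) (hne : (a, ma) ≠ (b, mb)) :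
    ¬ ((2 ^ (b + 1) : ℕ) : ℤ) ∣ (2 * ma - 1) * 2 ^ (b - a) - (2 * mb - 1) := by
  push_cast
  rcases hab.lt_or_eq with hlt | rfl
  · obtain ⟨d, hd⟩ : ∃ d, b - a = d + 1 := ⟨b - a - 1, by omega⟩
    intro h
    have h2 := (dvd_pow_self (2 : ℤ) (Nat.succ_ne_zero b)).trans h
    rw [hd, pow_succ, show ∀ x y : ℤ, x * (y * 2) = 2 * (x * y) from fun _ _ => by ring] at h2
    omega
  · have hne : (ma : ℤ) ≠ mb := by exact_mod_cast fun h => hne (by rw [h])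
    rintro ⟨c, hc⟩
    have hdvd : (2 ^ a : ℤ) ∣ ma - mb :=
      ⟨c, by rw [Nat.sub_self, pow_zero, pow_succ] at hc; linarith⟩
    have hma' : (ma : ℤ) ≤ 2 ^ a := by exact_mod_cast hma.2
    have hmb' : (mb : ℤ) ≤ 2 ^ a := by exact_mod_cast hmb.2
    have hlt : |(ma : ℤ) - mb| < 2 ^ a := abs_sub_lt_iff.2 ⟨by omega, by omega⟩
    exact hne (sub_eq_zero.1 (Int.eq_zero_of_abs_lt_dvd hdvd hlt))

lemma one_div_two_pow_le_abs_sin_half_theta_sub {a b ma mb : ℕ} (hab : a ≤ b)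
    (hma : 1 ≤ ma ∧ ma ≤ 2 ^ a) (hmb : 1 ≤ mb ∧ mb ≤ 2 ^ b) (hne : (a, ma) ≠ (b, mb)) :
    1 / 2 ^ b ≤ |sin ((theta a ma - theta b mb) / 2)| := by
  rw [theta_sub_theta_div_two hab]
  refine le_trans ?_ (sin_pi_div_le_abs_sin_int_mul_pi_div
    (not_two_pow_succ_dvd_theta_numerator hab hma hmb hne))
  have hle : π / 2 ^ (b + 1) ≤ π / 2 := by
    gcongr
    exact le_self_pow₀ one_le_two (Nat.succ_ne_zero b)
  push_cast
  calc (1 : ℝ) / 2 ^ b = 2 / π * (π / 2 ^ (b + 1)) := by field_simp; ring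
    _ ≤ sin (π / 2 ^ (b + 1)) := mul_le_sin (by positivity) hle

theorem Gr_triangle_general (r i j k mi mj mk : ℕ) (hr : 2 ≤ r)
    (hi : 2 ≤ i) (hij : i ≤ j) (hjk : j ≤ k)
    (hmi : 1 ≤ mi ∧ mi ≤ 2 ^ i) (hmj : 1 ≤ mj ∧ mj ≤ 2 ^ j)
    (h₁ : (Gr r).Adj (some (i, mi)) (some (j, mj)))
    (h₂ : (Gr r).Adj (some (i, mi)) (some (k, mk)))
    (h₃ : (Gr r).Adj (some (j, mj)) (some (k, mk))) :
    (k : ℤ) - (j : ℤ) ≤ (j : ℤ) - (i : ℤ) + 6 := by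
  set A := (theta i mi - theta k mk) / 2
  set B := (theta j mj - theta k mk) / 2
  have hA : sin A ^ 2 ≤ π ^ 2 / 2 ^ (i + k) :=
    sin_sq_half_theta_sub_le (by omega) (by omega) (by omega) h₂.2
  have hB : sin B ^ 2 ≤ π ^ 2 / 2 ^ (i + k) :=
    (sin_sq_half_theta_sub_le (by omega) (by omega) (by omega) h₃.2).trans
      (by gcongr; norm_num)
  have hAB : 1 / 2 ^ j ≤ |sin (A - B)| := by
    rw [show A - B = (theta i mi - theta j mj) / 2 by ring]
    exact one_div_two_pow_le_abs_sin_half_theta_sub hij hmi hmj (h₁.1 ∘ congrArg some)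
  have hsq : 1 / 2 ^ (2 * j) ≤ 4 * π ^ 2 / 2 ^ (i + k) := calc
    1 / 2 ^ (2 * j) = (1 / 2 ^ j : ℝ) ^ 2 := by ring
    _ ≤ sin (A - B) ^ 2 := by simpa using pow_le_pow_left₀ (by positivity) hAB 2
    _ ≤ 2 * (sin A ^ 2 + sin B ^ 2) := sin_sub_sq_le A B
    _ ≤ 4 * π ^ 2 / 2 ^ (i + k) := by rw [mul_div_assoc]; linarith
  have hpow : (2 : ℝ) ^ (i + k) < 2 ^ (2 * j + 6) := by
    rw [div_le_div_iff₀ (by positivity) (by positivity), one_mul] at hsq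
    calc (2 : ℝ) ^ (i + k) ≤ 4 * π ^ 2 * 2 ^ (2 * j) := hsq
      _ < 64 * 2 ^ (2 * j) := by gcongr; nlinarith [pi_pos, pi_lt_four]
      _ = 2 ^ (2 * j + 6) := by ring
  have := (pow_lt_pow_iff_right₀ one_lt_two).1 hpow
  omega

/-- Lemma 16 (Gr_triangle): if three vertices of `G_r` on levels
`2 ≤ i ≤ j ≤ k ≤ r` are pairwise adjacent, then `k − j ≤ j − i + 6`. -/
theorem Gr_triangle (r i j k mi mj mk : ℕ) (hr : 2 ≤ r)
    (hi : 2 ≤ i) (hij : i ≤ j) (hjk : j ≤ k) (hkr : k ≤ r)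
    (hmi : 1 ≤ mi ∧ mi ≤ 2 ^ i) (hmj : 1 ≤ mj ∧ mj ≤ 2 ^ j) (hmk : 1 ≤ mk ∧ mk ≤ 2 ^ k)
    (h₁ : (Gr r).Adj (some (i, mi)) (some (j, mj)))
    (h₂ : (Gr r).Adj (some (i, mi)) (some (k, mk)))
    (h₃ : (Gr r).Adj (some (j, mj)) (some (k, mk))) :
    (k : ℤ) - (j : ℤ) ≤ (j : ℤ) - (i : ℤ) + 6 :=
  Gr_triangle_general r i j k mi mj mk hr hi hij hjk hmi hmj h₁ h₂ h₃
end

section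
/- Let r ≥ 1 and c ≥ 0 be integers and let S ⊆ {1, …, r} be a set of integers such that for every three elements i < j < k of S one has k − j ≤ j − i + c. Then |S| < log₂(r) + c + 2. -/
/-- Lemma 17 (Gr_clique-levels): if `S ⊆ {1, …, r}` is such that every three
elements `i < j < k` of `S` satisfy `k − j ≤ j − i + c`, then
`|S| < log₂ r + c + 2`. -/
theorem clique_levels (r c : ℕ) (hr : 1 ≤ r) (S : Finset ℕ) (hS : S ⊆ Finset.Icc 1 r)
    (h : ∀ i ∈ S, ∀ j ∈ S, ∀ k ∈ S, i < j → j < k →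
      (k : ℤ) - (j : ℤ) ≤ (j : ℤ) - (i : ℤ) + (c : ℤ)) :
    (S.card : ℝ) < Real.logb 2 r + c + 2 := by
  have hr0 : (0:ℝ) ≤ Real.logb 2 r := by
    apply Real.logb_nonneg one_lt_two
    exact_mod_cast hr
  rcases S.eq_empty_or_nonempty with hE | hne
  · rw [hE]
    simp only [Finset.card_empty, Nat.cast_zero]
    positivity
  set M := S.max' hne with hM
  have hMS : M ∈ S := S.max'_mem hne
  set B := S.filter (fun s => s + c < M) with hBdef
  set A := S.filter (fun s => ¬ (s + c < M)) with hAdef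
  have hcard : S.card = B.card + A.card :=
    (Finset.card_filter_add_card_filter_not _).symm
  have hAcard : A.card ≤ c + 1 := by
    have hsub : A ⊆ Finset.Icc (M - c) M := by
      intro s hs
      rw [hAdef, Finset.mem_filter] at hs
      have hsM : s ≤ M := S.le_max' s hs.1
      have := hs.2
      rw [Finset.mem_Icc]
      omega
    calc A.card ≤ (Finset.Icc (M - c) M).card := Finset.card_le_card hsub
      _ = M + 1 - (M - c) := Nat.card_Icc _ _
      _ ≤ c + 1 := by omega
  -- g(s) = M - s - c ≥ 1 on B
  have gB : ∀ s ∈ B, (1:ℤ) ≤ (M:ℤ) - s - c := by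
    intro s hs
    rw [hBdef, Finset.mem_filter] at hs
    have := hs.2
    omega
  have halve : ∀ i ∈ B, ∀ j ∈ B, i < j →
      2 * ((M:ℤ) - j - c) ≤ (M:ℤ) - i - c := by
    intro i hi j hj hij
    rw [hBdef, Finset.mem_filter] at hi hj
    have hjM : j < M := by omega
    have := h i hi.1 j hj.1 M hMS hij hjM
    linarith
  have key : ∀ n : ℕ, ∀ T : Finset ℕ, T ⊆ B → T.card = n → ∀ hT : T.Nonempty,
      (2:ℤ)^(n-1) ≤ (M:ℤ) - T.min' hT - c := by
    intro n
    induction n with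
    | zero =>
      intro T _ hc hT
      exact absurd (Finset.card_eq_zero.mp hc) hT.ne_empty
    | succ n ih =>
      intro T hTB hc hT
      by_cases hn : n = 0
      · subst hn
        simpa using gB _ (hTB (T.min'_mem hT))
      · set m := T.min' hT with hm
        have hmT : m ∈ T := T.min'_mem hT
        set T' := T.erase m with hT'
        have hT'card : T'.card = n := by
          rw [hT', Finset.card_erase_of_mem hmT, hc]
          omega
        have hT'ne : T'.Nonempty := Finset.card_pos.mp (by omega)
        have hsub : T' ⊆ B := (Finset.erase_subset _ _).trans hTB
        have h1 := ih T' hsub hT'card hT'ne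
        set m' := T'.min' hT'ne with hm'
        have hm'T' : m' ∈ T' := T'.min'_mem hT'ne
        have hm'T : m' ∈ T := Finset.mem_of_mem_erase hm'T'
        have hmm' : m < m' := by
          have hle : m ≤ m' := T.min'_le m' hm'T
          have hne2 : m' ≠ m := Finset.ne_of_mem_erase hm'T'
          omega
        have h2 := halve m (hTB hmT) m' (hsub hm'T') hmm'
        have hpow : (2:ℤ)^(n + 1 - 1) = 2 * 2^(n-1) := by
          rw [← pow_succ']
          congr 1
          omega
        rw [hpow]
        linarith
  rcases B.eq_empty_or_nonempty with hBE | hBne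
  · have : S.card ≤ c + 1 := by rw [hcard, hBE]; simpa using hAcard
    have : (S.card : ℝ) ≤ c + 1 := by exact_mod_cast this
    linarith
  · set p := B.card with hp
    have hp1 : 1 ≤ p := Finset.card_pos.mpr hBne
    have hmin := key p B (subset_refl _) rfl hBne
    have hminmem : B.min' hBne ∈ B := B.min'_mem hBne
    have hminS : B.min' hBne ∈ S := Finset.mem_of_mem_filter _ hminmem
    have hmin1 : 1 ≤ B.min' hBne := by
      have := hS hminS; rw [Finset.mem_Icc] at this; exact this.1
    have hMr : M ≤ r := by
      have := hS hMS; rw [Finset.mem_Icc] at this; exact this.2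
    have hlt : (2:ℤ)^(p-1) < r := by
      have : (M:ℤ) - B.min' hBne - c ≤ (r:ℤ) - 1 := by
        omega
      linarith
  -- pass to naturals then reals
    have hltn : 2^(p-1) < r := by exact_mod_cast hlt
    have hlog : ((p:ℝ) - 1) < Real.logb 2 r := by
      have h2r : Real.logb 2 ((2:ℝ)^(p-1)) < Real.logb 2 r := by
        apply Real.logb_lt_logb one_lt_two (by positivity)
        exact_mod_cast hltn
      rw [Real.logb_pow, Real.logb_self_eq_one one_lt_two] at h2r
      have hcast : ((p - 1 : ℕ) : ℝ) = (p:ℝ) - 1 := by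
        push_cast [Nat.cast_sub hp1]
        ring
      rw [hcast] at h2r
      simpa using h2r
    have hScard : (S.card : ℝ) ≤ (p:ℝ) + c + 1 := by
      have : S.card ≤ p + c + 1 := by omega
      exact_mod_cast this
    linarith
end
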